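/- arXiv:1604.04039 — 8 statements merged into one kernel-verified Lean document; each statement's English description precedes it below -/
import Mathlib

section
/- For all integers α ≥ 1 and β ≥ 0, there exists an integer d₀ such that for all integers d ≥ d₀ and n satisfying n ≥ 2d and n ≥ d + 2^{2α+1}, the inequality f_{α,β}(d-1, n-1) + 2·f_{α,β}(d, ⌊n/2⌋) + 2 ≤ f_{α,β}(d, n) holds. -/
/-!
Write `x = n - d`, `A = β + d/α`, `B = β + (d-1)/α` and `c = log₂ A`, so that the
right-hand side is `x^c`. Since `⌊n/2⌋ - d ≤ x/2` and `2^c = A`, the middle term is at most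
`2x^c/A`, and since `x ≥ 2` also `2 ≤ 2x^c/A`. For the first term,
`log₂ A - log₂ B ≥ (A - B)/A = 1/(αA)`, so
`x^{log₂ B} ≤ x^c · exp(-log x/(αA)) ≤ (1 - 4/A) x^c` once `log x ≥ 8α` and `A ≥ 8`;
both hold as soon as `d ≥ exp(8α)`. The three bounds add up to `x^c`.
-/

open Real

namespace InductiveStep

lemma exp_neg_le_one_sub {s t : ℝ} (hs₀ : 0 ≤ s) (hs : s ≤ 1 / 2) (hst : 2 * s ≤ t) :
    exp (-t) ≤ 1 - s := by
  have hexp : 1 + 2 * s ≤ exp t := by linarith [add_one_le_exp t]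
  calc exp (-t) = (exp t)⁻¹ := exp_neg t
    _ ≤ (1 + 2 * s)⁻¹ := inv_anti₀ (by positivity) hexp
    _ ≤ 1 - s := by rw [inv_le_iff_one_le_mul₀ (by positivity)]; nlinarith

lemma rpow_le_one_sub_mul_rpow {x c c' s : ℝ} (hx : 0 < x) (hs₀ : 0 ≤ s) (hs : s ≤ 1 / 2)
    (hgap : 2 * s ≤ (c - c') * log x) : x ^ c' ≤ (1 - s) * x ^ c := by
  rw [rpow_def_of_pos hx, rpow_def_of_pos hx]
  calc exp (log x * c') = exp (-((c - c') * log x)) * exp (log x * c) := by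
        rw [← exp_add]; ring_nf
    _ ≤ (1 - s) * exp (log x * c) :=
        mul_le_mul_of_nonneg_right (exp_neg_le_one_sub hs₀ hs hgap) (exp_pos _).le

lemma sub_div_le_logb_two_sub_logb {A B : ℝ} (hB : 0 < B) (hBA : B ≤ A) :
    (A - B) / A ≤ logb 2 A - logb 2 B := by
  have hA : 0 < A := hB.trans_le hBA
  have hlog : 0 ≤ log (A / B) := log_nonneg ((one_le_div hB).2 hBA)
  calc (A - B) / A = 1 - (A / B)⁻¹ := by field_simp
    _ ≤ log (A / B) := one_sub_inv_le_log_of_pos (by positivity)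
    _ ≤ log (A / B) / log 2 :=
        le_div_self hlog (log_pos one_lt_two) (by linarith [log_two_lt_d9])
    _ = logb 2 A - logb 2 B := logb_div hA.ne' hB.ne'

lemma le_rpow_logb_two {x A : ℝ} (hx : 2 ≤ x) (hA : 1 ≤ A) : A ≤ x ^ logb 2 A := by
  calc A = 2 ^ logb 2 A := (rpow_logb two_pos (by norm_num) (by linarith)).symm
    _ ≤ x ^ logb 2 A := rpow_le_rpow two_pos.le hx (logb_nonneg one_lt_two hA)

lemma rpow_logb_two_le_div_of_le_half {x y A : ℝ} (hy : 0 ≤ y) (hyx : y ≤ x / 2)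
    (hA : 1 ≤ A) : y ^ logb 2 A ≤ x ^ logb 2 A / A := by
  have hx : 0 ≤ x := by linarith
  calc y ^ logb 2 A ≤ (x / 2) ^ logb 2 A := rpow_le_rpow hy hyx (logb_nonneg one_lt_two hA)
    _ = x ^ logb 2 A / A := by
        rw [div_rpow hx two_pos.le, rpow_logb two_pos (by norm_num) (by linarith)]

theorem rpow_logb_two_add_le {x y A B : ℝ} (hA : 8 ≤ A) (hB : 0 < B) (hx : 2 ≤ x)
    (hgap : 8 ≤ (A - B) * log x) (hy : 0 ≤ y) (hyx : y ≤ x / 2) :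
    x ^ logb 2 B + 2 * y ^ logb 2 A + 2 ≤ x ^ logb 2 A := by
  have hA₀ : 0 < A := by linarith
  have hlogx : 0 ≤ log x := log_nonneg (by linarith)
  have hBA : B ≤ A := by nlinarith
  set X := x ^ logb 2 A
  have hfirst : x ^ logb 2 B ≤ (1 - 4 / A) * X := by
    refine rpow_le_one_sub_mul_rpow (by linarith) (by positivity)
      (by rw [div_le_iff₀ hA₀]; linarith) ?_
    calc 2 * (4 / A) = 8 / A := by ring
      _ ≤ (A - B) * log x / A := by gcongr
      _ = (A - B) / A * log x := by ring
      _ ≤ (logb 2 A - logb 2 B) * log x := by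
          gcongr; exact sub_div_le_logb_two_sub_logb hB hBA
  have hmiddle : y ^ logb 2 A ≤ X / A := rpow_logb_two_le_div_of_le_half hy hyx (by linarith)
  have hone : 1 ≤ X / A := (one_le_div hA₀).2 (le_rpow_logb_two hx (by linarith))
  calc x ^ logb 2 B + 2 * y ^ logb 2 A + 2 ≤ (1 - 4 / A) * X + 2 * (X / A) + 2 * (X / A) := by
        linarith
    _ = X := by field_simp; ring

end InductiveStep

open InductiveStep in
/-- Lemma 2.2 (inductive-step lemma): for all integers `α ≥ 1` and `β ≥ 0`
there is a threshold `d₀` such that for all `d ≥ d₀` and `n ≥ 2d` with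
`n ≥ d + 2^{2α+1}`, the inductive-step inequality
`f_{α,β}(d-1,n-1) + 2 f_{α,β}(d,⌊n/2⌋) + 2 ≤ f_{α,β}(d,n)` holds, where
`f_{α,β}(d,n) = (n-d)^{log₂(β + d/α)}` (so
`f_{α,β}(d-1,n-1) = (n-d)^{log₂(β + (d-1)/α)}`). -/
theorem inductive_step_lemma (α β : ℕ) (hα : 1 ≤ α) :
    ∃ d₀ : ℕ, ∀ d n : ℕ, d₀ ≤ d → 2 * d ≤ n → d + 2 ^ (2 * α + 1) ≤ n →
      ((n : ℝ) - d) ^ Real.logb 2 ((β : ℝ) + ((d : ℝ) - 1) / α)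
        + 2 * (((n / 2 : ℕ) : ℝ) - d) ^ Real.logb 2 ((β : ℝ) + (d : ℝ) / α)
        + 2
      ≤ ((n : ℝ) - d) ^ Real.logb 2 ((β : ℝ) + (d : ℝ) / α) := by
  refine ⟨⌈exp (8 * α)⌉₊, fun d n hd hn _ => ?_⟩
  have hα₁ : (1 : ℝ) ≤ α := by exact_mod_cast hα
  have hα₀ : (0 : ℝ) < α := by linarith
  have hn : 2 * (d : ℝ) ≤ n := by exact_mod_cast hn
  have hd : exp (8 * α) ≤ d := Nat.ceil_le.1 hd
  have hd₁ : 8 * (α : ℝ) + 1 ≤ d := by linarith [add_one_le_exp (8 * (α : ℝ))]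
  have hhalf : (d : ℝ) ≤ ((n / 2 : ℕ) : ℝ) := by
    exact_mod_cast (Nat.le_div_iff_mul_le two_pos).2 (by omega)
  apply rpow_logb_two_add_le
  · have : 8 ≤ (d : ℝ) / α := by rw [le_div_iff₀ hα₀]; linarith
    linarith [(β.cast_nonneg : (0 : ℝ) ≤ β)]
  · have : 0 < ((d : ℝ) - 1) / α := div_pos (by linarith) hα₀
    linarith [(β.cast_nonneg : (0 : ℝ) ≤ β)]
  · linarith
  · have hlog : 8 * (α : ℝ) ≤ log ((n : ℝ) - d) :=
      (le_log_iff_exp_le (by linarith)).2 (by linarith)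
    calc (8 : ℝ) = 1 / α * (8 * α) := by field_simp
      _ ≤ _ := by
        rw [show (β : ℝ) + d / α - (β + (d - 1) / α) = 1 / α by ring]
        gcongr
  · linarith
  · linarith [(Nat.cast_div_le : ((n / 2 : ℕ) : ℝ) ≤ n / 2)]
end

section
/- For all integers α ≥ 1 and β ≥ 0, there exists an integer d₀ such that for all integers d ≥ d₀ and n satisfying n ≥ 2d and n ≥ d + 2^{2α+1}, the inequality (1 - (1/α)/(β + d/α))^{2α+1} + 2/(β + d/α) ≤ 1 - 2/f_{α,β}(d, n) holds. -/
/-!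
Put `x = β + d/α` and `t = 1/(αx)`. The exponent `m = 2α + 1` satisfies `m t = 2/x + t`,
so the second-order bound `(1 - t)^m ≤ 1 - m t + (m t)^2` turns the left-hand side into
`1 - t + (m t)^2`, and `(m t)^2 ≤ 9/x^2 ≤ t/2` once `x ≥ 18α`. On the right, `n - d ≥ d` and
`log₂ x ≥ 2` give `f_{α,β}(d,n) ≥ d^2 ≥ 4αx`, so `2/f_{α,β}(d,n) ≤ t/2`.
-/

open Real

/-- Bernoulli's inequality for `1 + t` gives `(1 - t)^m (1 + m t) ≤ (1 - t^2)^m ≤ 1`. -/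
theorem one_sub_pow_le_one_sub_mul_add_sq {t : ℝ} (h0 : 0 ≤ t) (h1 : t ≤ 1) (m : ℕ) :
    (1 - t) ^ m ≤ 1 - m * t + (m * t) ^ 2 := by
  have hmt₀ : 0 ≤ (m : ℝ) * t := by positivity
  have hprod : (1 - t) ^ m * (1 + m * t) ≤ 1 :=
    calc (1 - t) ^ m * (1 + m * t) ≤ (1 - t) ^ m * (1 + t) ^ m := by
          gcongr
          exact one_add_mul_le_pow (by linarith) m
      _ = (1 - t ^ 2) ^ m := by rw [← mul_pow]; ring
      _ ≤ 1 := pow_le_one₀ (by nlinarith) (by nlinarith)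
  have hcube : (1 - m * t + (m * t) ^ 2) * (1 + m * t) = 1 + (m * t) ^ 3 := by ring
  refine le_of_mul_le_mul_right ?_ (by positivity : (0 : ℝ) < 1 + m * t)
  nlinarith [pow_nonneg hmt₀ 3]

theorem one_sub_div_pow_add_two_div_le {a : ℕ} {x : ℝ} (ha : 1 ≤ a)
    (hx : 18 * a ≤ x) :
    (1 - (1 / (a : ℝ)) / x) ^ (2 * a + 1) + 2 / x ≤ 1 - 1 / (2 * a * x) := by
  have ha' : (1 : ℝ) ≤ a := by exact_mod_cast ha
  have hx0 : 0 < x := by linarith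
  set t := (1 / (a : ℝ)) / x with ht
  have ht0 : 0 ≤ t := by positivity
  have ht_le : t ≤ 1 / x := by
    rw [ht, div_div, one_div_le_one_div (by positivity) hx0]
    nlinarith
  have hmt : ((2 * a + 1 : ℕ) : ℝ) * t = 2 / x + t := by
    rw [ht]; push_cast; field_simp
  have hsq : (2 / x + t) ^ 2 ≤ 1 / (2 * a * x) :=
    calc (2 / x + t) ^ 2 ≤ (3 / x) ^ 2 := by
          gcongr
          linarith [show 3 / x = 2 / x + 1 / x by ring]
      _ ≤ 1 / (2 * a * x) := by
          rw [div_pow, div_le_div_iff₀ (by positivity) (by positivity)]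
          nlinarith
  have htx : t = 2 * (1 / (2 * a * x)) := by rw [ht]; field_simp
  have hbound := one_sub_pow_le_one_sub_mul_add_sq ht0 (ht_le.trans
    ((div_le_one hx0).2 (by linarith))) (2 * a + 1)
  rw [hmt] at hbound
  linarith

theorem sq_le_rpow_logb_two {y x : ℝ} (hy : 1 ≤ y) (hx : 4 ≤ x) :
    y ^ 2 ≤ y ^ logb 2 x := by
  have hlog : (2 : ℝ) ≤ logb 2 x := by
    rw [le_logb_iff_rpow_le (by norm_num) (by linarith), rpow_two]
    linarith
  rw [← rpow_two]
  exact rpow_le_rpow_of_exponent_le hy hlog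

/-- Claim 3.2: for all integers `α ≥ 1` and `β ≥ 0` there is a threshold `d₀`
such that for all `d ≥ d₀` and `n ≥ 2d` with `n ≥ d + 2^{2α+1}`,
`(1 - (1/α)/(β + d/α))^{2α+1} + 2/(β + d/α) ≤ 1 - 2/f_{α,β}(d,n)`, where
`f_{α,β}(d,n) = (n-d)^{log₂(β + d/α)}`. -/
theorem claim_threshold (α β : ℕ) (hα : 1 ≤ α) :
    ∃ d₀ : ℕ, ∀ d n : ℕ, d₀ ≤ d → 2 * d ≤ n → d + 2 ^ (2 * α + 1) ≤ n →
      (1 - (1 / (α : ℝ)) / ((β : ℝ) + (d : ℝ) / α)) ^ (2 * α + 1)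
        + 2 / ((β : ℝ) + (d : ℝ) / α)
      ≤ 1 - 2 / (((n : ℝ) - d) ^ Real.logb 2 ((β : ℝ) + (d : ℝ) / α)) := by
  refine ⟨18 * α ^ 2 + 4 * α * β + 4, fun d n hd₀ hn _ => ?_⟩
  have hα' : (1 : ℝ) ≤ α := by exact_mod_cast hα
  have hd : (18 * α ^ 2 + 4 * α * β + 4 : ℝ) ≤ d := by exact_mod_cast hd₀
  have hn' : (2 * d : ℝ) ≤ n := by exact_mod_cast hn
  have hd4 : (4 : ℝ) ≤ d := by exact_mod_cast (Nat.le_add_left 4 _).trans hd₀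
  have hαβ : (4 * α * β : ℝ) ≤ d - 4 := by linarith [sq_nonneg (α : ℝ)]
  set x := (β : ℝ) + d / α
  have hαx : α * x = α * β + d := by simp only [x]; field_simp
  have hx : 18 * α ≤ x := by
    refine le_of_mul_le_mul_left ?_ (by linarith : (0 : ℝ) < α)
    nlinarith
  have hf : (d : ℝ) ^ 2 ≤ ((n : ℝ) - d) ^ logb 2 x :=
    (pow_le_pow_left₀ (by positivity) (by linarith) 2).trans
      (sq_le_rpow_logb_two (by linarith) (by nlinarith))
  have hdsq : 4 * α * x ≤ (d : ℝ) ^ 2 := by nlinarith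
  calc _ ≤ 1 - 1 / (2 * α * x) := one_sub_div_pow_add_two_div_le hα hx
    _ = 1 - 2 / (4 * α * x) := by field_simp; ring
    _ ≤ 1 - 2 / ((n : ℝ) - d) ^ logb 2 x := by
        gcongr
        exact hdsq.trans hf
end

section
/- For every real number D ≥ 17, (D - 1/8)^{17} + 2·D^{16} + 2 ≤ D^{17}. -/
/-- Appendix B: for every real `D ≥ 17`,
`(D - 1/8)^{17} + 2 D^{16} + 2 ≤ D^{17}`. -/
theorem appendix_d816 (D : ℝ) (hD : 17 ≤ D) :
    (D - 1 / 8) ^ 17 + 2 * D ^ 16 + 2 ≤ D ^ 17 := by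
  have ht : (0:ℝ) ≤ D - 17 := by linarith
  nlinarith [pow_nonneg ht 17, pow_nonneg ht 16, pow_nonneg ht 15,
    pow_nonneg ht 14, pow_nonneg ht 13, pow_nonneg ht 12, pow_nonneg ht 11,
    pow_nonneg ht 10, pow_nonneg ht 9, pow_nonneg ht 8, pow_nonneg ht 7,
    pow_nonneg ht 6, pow_nonneg ht 5, pow_nonneg ht 4, pow_nonneg ht 3,
    pow_nonneg ht 2, ht]
end

section
/- For all integers d ≥ 10 and n satisfying n ≥ 2d and n ≥ d + 32, the inequality (n-d)^{log₂((d-1)/2)} + 2·(⌊n/2⌋ - d)^{log₂(d/2)} + 2 ≤ (n-d)^{log₂(d/2)} holds. -/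
/-!
Write `X = n - d ≥ 2⁵` and `P = X ^ log₂(d/2)`. Since `X ≥ 2⁵`, raising `X` to `log₂ y` gains at
least a factor `y⁵`; hence `P ≥ (d/2)⁵`, and the first term is `P` divided by
`X ^ log₂(d/(d-1)) ≥ (d/(d-1))⁵`. The middle term is at most `(X/2) ^ log₂(d/2) = P / (d/2)`.
After dividing by `P`, what remains is the polynomial inequality `(d-1)⁵ + 4d⁴ + 64 ≤ d⁵`.
-/

namespace Real

variable {b m X y y' : ℝ}

lemma pow_le_rpow_logb_of_pow_le (hb : 1 < b) (hy : 1 ≤ y) {k : ℕ} (hX : b ^ k ≤ X) :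
    y ^ k ≤ X ^ logb b y := by
  have hb0 : 0 < b := by linarith
  calc y ^ k = (b ^ logb b y) ^ k := by rw [rpow_logb hb0 hb.ne' (by linarith)]
    _ = (b ^ k) ^ logb b y := by
        rw [← rpow_natCast, ← rpow_natCast b k, ← rpow_mul hb0.le, ← rpow_mul hb0.le, mul_comm]
    _ ≤ X ^ logb b y := rpow_le_rpow (by positivity) hX (logb_nonneg hb hy)

lemma rpow_logb_le_div_pow_mul (hb : 1 < b) (hy' : 0 < y') (hy : y' ≤ y) {k : ℕ}
    (hX : b ^ k ≤ X) : X ^ logb b y' ≤ (y' / y) ^ k * X ^ logb b y := by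
  have hy0 : 0 < y := hy'.trans_le hy
  have hX0 : 0 < X := lt_of_lt_of_le (by positivity) hX
  have hsplit : X ^ logb b y = X ^ logb b y' * X ^ logb b (y / y') := by
    rw [← rpow_add hX0, logb_div (by positivity) hy'.ne']
    ring_nf
  have hgain : (y / y') ^ k ≤ X ^ logb b (y / y') :=
    pow_le_rpow_logb_of_pow_le hb ((one_le_div hy').mpr hy) hX
  have hcancel : (y' / y) ^ k * (y / y') ^ k = 1 := by
    rw [← mul_pow, div_mul_div_comm, mul_comm y', div_self (by positivity), one_pow]
  calc X ^ logb b y' = (y' / y) ^ k * (y / y') ^ k * X ^ logb b y' := by rw [hcancel, one_mul]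
    _ ≤ (y' / y) ^ k * X ^ logb b (y / y') * X ^ logb b y' := by gcongr
    _ = (y' / y) ^ k * X ^ logb b y := by rw [hsplit]; ring

lemma rpow_logb_le_div_of_le_div (hb : 1 < b) (hy : 1 ≤ y) (hm : 0 ≤ m) (hmX : m ≤ X / b) :
    m ^ logb b y ≤ X ^ logb b y / y := by
  have hb0 : 0 < b := by linarith
  have hX0 : 0 ≤ X := by
    have := mul_nonneg (hm.trans hmX) hb0.le
    rwa [div_mul_cancel₀ _ hb0.ne'] at this
  calc m ^ logb b y ≤ (X / b) ^ logb b y := rpow_le_rpow hm hmX (logb_nonneg hb hy)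
    _ = X ^ logb b y / y := by rw [div_rpow hX0 hb0.le, rpow_logb hb0 hb.ne' (by linarith)]

end Real

lemma sub_one_pow_five_add_le (D : ℝ) (hD : 10 ≤ D) : (D - 1) ^ 5 + 4 * D ^ 4 + 64 ≤ D ^ 5 := by
  have hD3 : 0 ≤ D ^ 3 * (D - 10) := mul_nonneg (by positivity) (by linarith)
  nlinarith

lemma sub_one_div_pow_five_mul_add_le {D P : ℝ} (hD : 10 ≤ D) (hP : (D / 2) ^ 5 ≤ P) :
    ((D - 1) / D) ^ 5 * P + 2 * (P / (D / 2)) + 2 ≤ P := by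
  have hD0 : 0 < D := by linarith
  have hpoly := sub_one_pow_five_add_le D hD
  have hP0 : 0 ≤ P := le_trans (by positivity) hP
  have hP' : 2 * D ^ 5 ≤ 64 * P := by rw [div_pow] at hP; linarith
  have hsum : ((D - 1) / D) ^ 5 * P + 2 * (P / (D / 2)) + 2
      = ((D - 1) ^ 5 * P + 4 * D ^ 4 * P + 2 * D ^ 5) / D ^ 5 := by
    field_simp
    ring
  rw [hsum, div_le_iff₀ (by positivity)]
  linarith [mul_le_mul_of_nonneg_right hpoly hP0]

/-- Inductive-step inequality for `(α,β) = (2,0)`: for integers `d ≥ 10`,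
`n ≥ 2d`, `n ≥ d + 32`,
`(n-d)^{log₂((d-1)/2)} + 2 (⌊n/2⌋-d)^{log₂(d/2)} + 2 ≤ (n-d)^{log₂(d/2)}`. -/
theorem inductive_step_2_0 (d n : ℕ) (hd : 10 ≤ d) (hn2d : 2 * d ≤ n)
    (hn : d + 32 ≤ n) :
    ((n : ℝ) - d) ^ Real.logb 2 (((d : ℝ) - 1) / 2)
      + 2 * (((n / 2 : ℕ) : ℝ) - d) ^ Real.logb 2 ((d : ℝ) / 2) + 2
    ≤ ((n : ℝ) - d) ^ Real.logb 2 ((d : ℝ) / 2) := by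
  have hD : (10 : ℝ) ≤ d := by exact_mod_cast hd
  have hX : (2 : ℝ) ^ 5 ≤ (n : ℝ) - d := by
    have : (d : ℝ) + 32 ≤ n := by exact_mod_cast hn
    linarith
  have hhalf : ((n / 2 : ℕ) : ℝ) ≤ n / 2 := Nat.cast_div_le
  have hm0 : (0 : ℝ) ≤ ((n / 2 : ℕ) : ℝ) - d := by
    have : (d : ℝ) ≤ ((n / 2 : ℕ) : ℝ) := by exact_mod_cast (by omega : d ≤ n / 2)
    linarith
  set P := ((n : ℝ) - d) ^ Real.logb 2 ((d : ℝ) / 2)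
  have hP : ((d : ℝ) / 2) ^ 5 ≤ P := Real.pow_le_rpow_logb_of_pow_le one_lt_two (by linarith) hX
  have hfirst := Real.rpow_logb_le_div_pow_mul one_lt_two (y' := (d - 1) / 2)
    (y := d / 2) (by linarith) (by linarith) hX
  rw [show ((d : ℝ) - 1) / 2 / (d / 2) = (d - 1) / d by field_simp] at hfirst
  have hmid := Real.rpow_logb_le_div_of_le_div one_lt_two (X := (n : ℝ) - d) (y := d / 2)
    (by linarith) hm0 (by linarith)
  calc _ ≤ ((d - 1) / d) ^ 5 * P + 2 * (P / (d / 2)) + 2 := by gcongr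
    _ ≤ P := sub_one_div_pow_five_mul_add_le hD hP
end

section
/- For all integers d ≥ 36 and n satisfying n ≥ 2d and n ≥ d + 512, the inequality (n-d)^{log₂((d-1)/4)} + 2·(⌊n/2⌋ - d)^{log₂(d/4)} + 2 ≤ (n-d)^{log₂(d/4)} holds. -/
/-- Inductive-step inequality for `(α,β) = (4,0)`: for integers `d ≥ 36`,
`n ≥ 2d`, `n ≥ d + 512`,
`(n-d)^{log₂((d-1)/4)} + 2 (⌊n/2⌋-d)^{log₂(d/4)} + 2 ≤ (n-d)^{log₂(d/4)}`. -/
theorem inductive_step_4_0 (d n : ℕ) (hd : 36 ≤ d) (hn2d : 2 * d ≤ n)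
    (hn : d + 512 ≤ n) :
    ((n : ℝ) - d) ^ Real.logb 2 (((d : ℝ) - 1) / 4)
      + 2 * (((n / 2 : ℕ) : ℝ) - d) ^ Real.logb 2 ((d : ℝ) / 4) + 2
    ≤ ((n : ℝ) - d) ^ Real.logb 2 ((d : ℝ) / 4) := by
  have hD : (36:ℝ) ≤ (d:ℝ) := by exact_mod_cast hd
  have hD0 : (0:ℝ) < d := by linarith
  set D := (d:ℝ) with hDdef
  set x := (n:ℝ) - D with hxdef
  have hx : (512:ℝ) ≤ x := by
    have : (d:ℝ) + 512 ≤ n := by exact_mod_cast hn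
    simp only [hxdef]; linarith
  have hx0 : (0:ℝ) < x := by linarith
  set a := Real.logb 2 (D/4) with hadef
  set a' := Real.logb 2 ((D-1)/4) with ha'def
  have hd4 : (0:ℝ) < D/4 := by linarith
  have hd14 : (0:ℝ) < (D-1)/4 := by linarith
  have ha2 : (2:ℝ) ^ a = D/4 := Real.rpow_logb (by norm_num) (by norm_num) hd4
  have ha0 : 0 ≤ a := Real.logb_nonneg (by norm_num) (by linarith)
  -- exponent difference
  set c := a' - a with hcdef
  have hc : (2:ℝ) ^ c = (D-1)/D := by
    rw [hcdef, hadef, ha'def, ← Real.logb_div (ne_of_gt hd14) (ne_of_gt hd4)]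
    rw [Real.rpow_logb (by norm_num) (by norm_num) (by positivity)]
    field_simp
  have hc0 : c ≤ 0 := by
    have h1 : a' ≤ a :=
      (Real.logb_le_logb (by norm_num) hd14 hd4).mpr (by linarith)
    simp only [hcdef]; linarith
  -- bound first term
  have h512c : (512:ℝ) ^ c = ((D-1)/D)^(9:ℕ) := by
    have h9 : (512:ℝ) = (2:ℝ) ^ (9:ℕ) := by norm_num
    rw [h9, ← Real.rpow_natCast 2 9, ← Real.rpow_mul (by norm_num)]
    rw [mul_comm, Real.rpow_mul (by norm_num), Real.rpow_natCast, hc]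
  have hfirst : x ^ a' ≤ ((D-1)/D)^(9:ℕ) * x ^ a := by
    have hsplit : x ^ a' = x ^ c * x ^ a := by
      rw [hcdef, ← Real.rpow_add hx0]; ring_nf
    rw [hsplit]
    have hxc : x ^ c ≤ (512:ℝ) ^ c :=
      Real.rpow_le_rpow_of_nonpos (by norm_num) hx hc0
    have hxa : 0 < x ^ a := Real.rpow_pos_of_pos hx0 a
    nlinarith [h512c ▸ hxc]
  -- bound middle term
  have hm0 : (0:ℝ) ≤ ((n / 2 : ℕ) : ℝ) - D := by
    have h1 : d ≤ n / 2 := Nat.le_div_iff_mul_le (by norm_num) |>.mpr (by omega)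
    have h2 : (d:ℝ) ≤ ((n/2:ℕ):ℝ) := by exact_mod_cast h1
    linarith
  have hm : ((n / 2 : ℕ) : ℝ) - D ≤ x / 2 := by
    have h0 : (n/2:ℕ) * 2 ≤ n := Nat.div_mul_le_self n 2
    have h1 : ((n/2:ℕ):ℝ) * 2 ≤ (n:ℝ) := by exact_mod_cast h0
    simp only [hxdef]; linarith
  have hmid : (((n / 2 : ℕ) : ℝ) - D) ^ a ≤ x ^ a / (D/4) := by
    have h1 : (((n / 2 : ℕ) : ℝ) - D) ^ a ≤ (x/2) ^ a :=
      Real.rpow_le_rpow hm0 hm ha0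
    have h2 : (x/2) ^ a = x ^ a / (2:ℝ) ^ a :=
      Real.div_rpow hx0.le (by norm_num) a
    rw [ha2] at h2
    linarith [h2.le]
  -- lower bound on x ^ a
  have hXlb : (D/4)^(9:ℕ) ≤ x ^ a := by
    have h1 : (512:ℝ) ^ a ≤ x ^ a := Real.rpow_le_rpow (by norm_num) hx ha0
    have h2 : (512:ℝ) ^ a = (D/4)^(9:ℕ) := by
      have h9 : (512:ℝ) = (2:ℝ) ^ (9:ℕ) := by norm_num
      rw [h9, ← Real.rpow_natCast 2 9, ← Real.rpow_mul (by norm_num)]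
      rw [mul_comm, Real.rpow_mul (by norm_num), Real.rpow_natCast, ha2]
    linarith [h2 ▸ h1]
  -- polynomial inequality
  have hpoly : (524288:ℝ) ≤ D^9 - 8*D^8 - (D-1)^9 := by
    have e1 : 0 ≤ D^7 * (D - 36) := mul_nonneg (by positivity) (by linarith)
    have e2 : (36:ℝ)^5 ≤ D^5 := pow_le_pow_left₀ (by norm_num) hD 5
    have e3 : (2898:ℝ) ≤ 84*D - 126 := by linarith
    have e4 : (524288:ℝ) ≤ D^5 * (84*D - 126) := by nlinarith [e2, e3]
    have e5 : 0 ≤ D^3 * (126*D - 84) := mul_nonneg (by positivity) (by linarith)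
    have e6 : 0 ≤ D * (36*D - 9) := mul_nonneg (by positivity) (by linarith)
    have hid : D^9 - 8*D^8 - (D-1)^9
        = D^7 * (D - 36) + D^5 * (84*D - 126) + D^3 * (126*D - 84)
          + D * (36*D - 9) + 1 := by ring
    linarith [e1, e4, e5, e6]
  -- combine
  have hX0 : (0:ℝ) < x ^ a := Real.rpow_pos_of_pos hx0 a
  have hD9 : (0:ℝ) < D^9 := by positivity
  have hkey : ((D-1)/D)^(9:ℕ) * x ^ a + 2 * (x ^ a / (D/4)) + 2 ≤ x ^ a := by
    have hA : 524288 * x^a ≤ (D^9 - 8*D^8 - (D-1)^9) * x^a :=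
      mul_le_mul_of_nonneg_right hpoly hX0.le
    have hB : 524288 * (D/4)^(9:ℕ) ≤ 524288 * x^a := by linarith
    have hC : (524288:ℝ) * (D/4)^(9:ℕ) = 2 * D^9 := by ring
    have hgoal' : (D-1)^9 * x^a + 8*D^8 * x^a + 2*D^9 ≤ D^9 * x^a := by linarith [hA, hB, hC]
    calc ((D-1)/D)^(9:ℕ) * x ^ a + 2 * (x ^ a / (D/4)) + 2
        = ((D-1)^9 * x^a + 8*D^8 * x^a + 2*D^9) / D^9 := by
          field_simp; ring
      _ ≤ (D^9 * x^a) / D^9 := (div_le_div_iff_of_pos_right hD9).mpr hgoal'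
      _ = x ^ a := by field_simp
  calc x ^ a' + 2 * ((((n / 2 : ℕ) : ℝ) - D)) ^ a + 2
      ≤ ((D-1)/D)^(9:ℕ) * x ^ a + 2 * (x ^ a / (D/4)) + 2 := by linarith
    _ ≤ x ^ a := hkey
end

section
/- For all integers d ≥ 8 and n satisfying n ≥ 2d and n ≥ d + 131072, the inequality (n-d)^{log₂(16 + (d-1)/8)} + 2·(⌊n/2⌋ - d)^{log₂(16 + d/8)} + 2 ≤ (n-d)^{log₂(16 + d/8)} holds. -/
/-!
Write `X = n - d`, `b = 16 + d/8`, `a = b - 1/8` and `p = log₂ b`. Since `X ≥ 2^17` and the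
exponent drops by `log₂ (b/a)`, the first term is at most `X^p (a/b)^17 = X^p (1 - 1/(8b))^17`;
since `⌊n/2⌋ - d ≤ X/2` and `2^p = b`, the middle term is at most `2 X^p / b`; and
`X^p ≥ b^17` makes the constant `2` negligible. With `s = 1/(8b) ≤ 1/136` everything reduces
to the polynomial inequality `(1 - s)^17 + 16 s + s^3 ≤ 1`.
-/

open Real

lemma pow_rpow_logb (k : ℕ) {c b : ℝ} (hc : 0 < c) (hc1 : c ≠ 1) (hb : 0 < b) :
    (c ^ k) ^ logb c b = b ^ k := by
  rw [← rpow_natCast, ← rpow_mul hc.le, mul_comm, rpow_mul hc.le, rpow_logb hc hc1 hb,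
    rpow_natCast]

lemma pow_le_rpow_logb {k : ℕ} {c b X : ℝ} (hc : 1 < c) (hb : 1 ≤ b) (hX : c ^ k ≤ X) :
    b ^ k ≤ X ^ logb c b := by
  rw [← pow_rpow_logb k (by linarith) hc.ne' (by linarith)]
  exact rpow_le_rpow (pow_nonneg (by linarith) k) hX (logb_nonneg hc hb)

lemma rpow_logb_le_rpow_logb_mul_div_pow {k : ℕ} {c a b X : ℝ} (hc : 1 < c) (ha : 0 < a)
    (hab : a ≤ b) (hX : c ^ k ≤ X) : X ^ logb c a ≤ X ^ logb c b * (a / b) ^ k := by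
  have hb : 0 < b := ha.trans_le hab
  have hck : 0 < c ^ k := pow_pos (by linarith) k
  have hexp : logb c a - logb c b ≤ 0 := sub_nonpos.2 (logb_le_logb_of_le hc ha hab)
  calc X ^ logb c a = X ^ logb c b * X ^ (logb c a - logb c b) := by
        rw [← rpow_add (hck.trans_le hX), add_sub_cancel]
    _ ≤ X ^ logb c b * (c ^ k) ^ (logb c a - logb c b) :=
        mul_le_mul_of_nonneg_left (rpow_le_rpow_of_nonpos hck hX hexp)
          (rpow_nonneg (hck.le.trans hX) _)
    _ = X ^ logb c b * (a / b) ^ k := by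
        rw [← logb_div ha.ne' hb.ne', pow_rpow_logb k (by linarith) hc.ne' (div_pos ha hb)]

lemma div_rpow_logb {c b X : ℝ} (hc : 0 < c) (hc1 : c ≠ 1) (hX : 0 ≤ X) (hb : 0 < b) :
    (X / c) ^ logb c b = X ^ logb c b / b := by
  rw [div_rpow hX hc.le, rpow_logb hc hc1 hb]

lemma one_sub_pow_seventeen_add_le {s : ℝ} (h0 : 0 ≤ s) (h1 : s ≤ 1 / 136) :
    (1 - s) ^ 17 + 16 * s + s ^ 3 ≤ 1 := by
  have h4 : (1 - s) ^ 4 ≤ 1 - 4 * s + 6 * s ^ 2 := by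
    nlinarith [mul_nonneg (pow_nonneg h0 3) (show (0 : ℝ) ≤ 4 - s by linarith)]
  have h8 : (1 - s) ^ 8 ≤ 1 - 8 * s + 28 * s ^ 2 := by
    have := pow_le_pow_left₀ (by positivity) h4 2
    nlinarith [mul_nonneg (pow_nonneg h0 3) (show (0 : ℝ) ≤ 48 - 36 * s by linarith)]
  have h16 : (1 - s) ^ 16 ≤ 1 - 16 * s + 120 * s ^ 2 := by
    have := pow_le_pow_left₀ (by positivity) h8 2
    nlinarith [mul_nonneg (pow_nonneg h0 3) (show (0 : ℝ) ≤ 448 - 784 * s by linarith)]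
  have h17 : (1 - s) ^ 17 ≤ (1 - 16 * s + 120 * s ^ 2) * (1 - s) := by
    rw [pow_succ]; exact mul_le_mul_of_nonneg_right h16 (by linarith)
  nlinarith [mul_nonneg (mul_nonneg h0 h0) (show (0 : ℝ) ≤ 1 - 136 * s by linarith)]

lemma mul_one_sub_pow_seventeen_add_le {b Y : ℝ} (hb : 17 ≤ b) (hY : b ^ 17 ≤ Y) :
    Y * (1 - 1 / (8 * b)) ^ 17 + 2 * (Y / b) + 2 ≤ Y := by
  set s := 1 / (8 * b) with hs
  have hbpos : 0 < b := by linarith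
  have hs0 : 0 ≤ s := by positivity
  have hs1 : s ≤ 1 / 136 := by
    rw [hs, div_le_div_iff₀ (by positivity) (by norm_num)]; linarith
  have htail : 2 ≤ Y * s ^ 3 := by
    have h14 : (17 : ℝ) ^ 14 ≤ b ^ 14 := pow_le_pow_left₀ (by norm_num) hb 14
    have : b ^ 17 * s ^ 3 = b ^ 14 / 512 := by rw [hs]; field_simp; ring
    nlinarith [mul_le_mul_of_nonneg_right hY (pow_nonneg hs0 3)]
  have hmid : 2 * (Y / b) = Y * (16 * s) := by rw [hs]; field_simp; ring
  have hY0 : 0 ≤ Y := (pow_nonneg hbpos.le 17).trans hY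
  nlinarith [mul_le_mul_of_nonneg_left (one_sub_pow_seventeen_add_le hs0 hs1) hY0]

/-- Inductive-step inequality for `(α,β) = (8,16)`: for integers `d ≥ 8`,
`n ≥ 2d`, `n ≥ d + 2^{17}`,
`(n-d)^{log₂(16+(d-1)/8)} + 2 (⌊n/2⌋-d)^{log₂(16+d/8)} + 2
  ≤ (n-d)^{log₂(16+d/8)}`. -/
theorem inductive_step_8_16 (d n : ℕ) (hd : 8 ≤ d) (hn2d : 2 * d ≤ n)
    (hn : d + 131072 ≤ n) :
    ((n : ℝ) - d) ^ Real.logb 2 (16 + ((d : ℝ) - 1) / 8)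
      + 2 * (((n / 2 : ℕ) : ℝ) - d) ^ Real.logb 2 (16 + (d : ℝ) / 8) + 2
    ≤ ((n : ℝ) - d) ^ Real.logb 2 (16 + (d : ℝ) / 8) := by
  set b : ℝ := 16 + (d : ℝ) / 8 with hb_def
  have hd' : (8 : ℝ) ≤ d := by exact_mod_cast hd
  have hb : 17 ≤ b := by rw [hb_def]; linarith
  have hX : (2 : ℝ) ^ 17 ≤ (n : ℝ) - d := by
    rw [le_sub_iff_add_le']; exact_mod_cast hn
  have hhalf_nonneg : (0 : ℝ) ≤ ((n / 2 : ℕ) : ℝ) - d := by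
    rw [sub_nonneg]; exact_mod_cast Nat.le_div_iff_mul_le two_pos |>.2 (by omega)
  have hhalf_le : ((n / 2 : ℕ) : ℝ) - d ≤ ((n : ℝ) - d) / 2 := by
    have := Nat.cast_div_le (m := n) (n := 2) (α := ℝ)
    push_cast at this; linarith
  have hratio : (16 + ((d : ℝ) - 1) / 8) / b = 1 - 1 / (8 * b) := by
    field_simp; ring
  calc _ ≤ ((n : ℝ) - d) ^ logb 2 b * ((16 + ((d : ℝ) - 1) / 8) / b) ^ 17
          + 2 * (((n : ℝ) - d) / 2) ^ logb 2 b + 2 := by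
        gcongr
        · exact rpow_logb_le_rpow_logb_mul_div_pow one_lt_two (by linarith)
            (by rw [hb_def]; linarith) hX
        · exact logb_nonneg one_lt_two (by linarith)
    _ ≤ ((n : ℝ) - d) ^ logb 2 b := by
        rw [hratio, div_rpow_logb two_pos (by norm_num) (by linarith) (by linarith)]
        exact mul_one_sub_pow_seventeen_add_le hb (pow_le_rpow_logb one_lt_two (by linarith) hX)
end

section
/- Let α ≥ 1, β ≥ 0, l ≥ 3 be integers with β + l/α ≥ 2, and set f(d,n) = (n-d)^{log₂(β + d/α)}. Let d₀ be an integer such that for all integers d ≥ d₀ and n with n ≥ 2d and n ≥ d + 2^{2α+1}, one has f(d-1,n-1) + 2·f(d,⌊n/2⌋) + 2 ≤ f(d,n). Let Δ : ℕ → ℕ → ℕ satisfy: (KK) Δ(d,n) ≤ Δ(d-1,n-1) + 2·Δ(d,⌊n/2⌋) + 2 whenever 2 ≤ d ≤ ⌊n/2⌋; and (M) Δ(d,n) ≤ Δ(d-1,n-1) whenever 4 ≤ d ≤ n < 2d. Suppose moreover that: (B₀) Δ(l,n) ≤ f(l,n) for all n ≥ l; (B₁) Δ(d,n) ≤ f(d,n)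 for all d with l < d < d₀ and all n ≥ 2d; (B₂) Δ(d,n) ≤ f(d,n) for all d with d₀ ≤ d < 2^{2α+1} and all n with 2d ≤ n < d + 2^{2α+1}. Then Δ(d,n) ≤ f(d,n) for all integers n ≥ d ≥ l. -/
private lemma aux_rpow_mono (x a b : ℝ) (hx1 : x = 0 ∨ 1 ≤ x) (ha : 0 < a) (hab : a ≤ b) :
    x ^ a ≤ x ^ b := by
  rcases hx1 with h | h
  · subst h
    rw [Real.zero_rpow ha.ne', Real.zero_rpow (ha.trans_le hab).ne']
  · exact Real.rpow_le_rpow_of_exponent_le h hab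

/-- Proposition 2.3 (base case + induction): if the inductive-step inequality
holds from dimension `d₀` on and the base cases `(B₀)`, `(B₁)`, `(B₂)` hold,
then `Δ(d,n) ≤ f(d,n) = (n-d)^{log₂(β + d/α)}` for all `n ≥ d ≥ l`. -/
theorem base_case_induction
    (α β l : ℕ) (hα : 1 ≤ α) (hl : 3 ≤ l)
    (hβl : (2 : ℝ) ≤ (β : ℝ) + (l : ℝ) / α)
    (d₀ : ℕ)
    (hstep : ∀ d n : ℕ, d₀ ≤ d → 2 * d ≤ n → d + 2 ^ (2 * α + 1) ≤ n →
      ((n : ℝ) - d) ^ Real.logb 2 ((β : ℝ) + ((d : ℝ) - 1) / α)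
        + 2 * (((n / 2 : ℕ) : ℝ) - d) ^ Real.logb 2 ((β : ℝ) + (d : ℝ) / α) + 2
      ≤ ((n : ℝ) - d) ^ Real.logb 2 ((β : ℝ) + (d : ℝ) / α))
    (Δ : ℕ → ℕ → ℕ)
    (hKK : ∀ d n : ℕ, 2 ≤ d → d ≤ n / 2 →
      Δ d n ≤ Δ (d - 1) (n - 1) + 2 * Δ d (n / 2) + 2)
    (hM : ∀ d n : ℕ, 4 ≤ d → d ≤ n → n < 2 * d → Δ d n ≤ Δ (d - 1) (n - 1))
    (hB0 : ∀ n : ℕ, l ≤ n →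
      (Δ l n : ℝ) ≤ ((n : ℝ) - l) ^ Real.logb 2 ((β : ℝ) + (l : ℝ) / α))
    (hB1 : ∀ d n : ℕ, l < d → d < d₀ → 2 * d ≤ n →
      (Δ d n : ℝ) ≤ ((n : ℝ) - d) ^ Real.logb 2 ((β : ℝ) + (d : ℝ) / α))
    (hB2 : ∀ d n : ℕ, d₀ ≤ d → d < 2 ^ (2 * α + 1) → 2 * d ≤ n →
      n < d + 2 ^ (2 * α + 1) →
      (Δ d n : ℝ) ≤ ((n : ℝ) - d) ^ Real.logb 2 ((β : ℝ) + (d : ℝ) / α)) :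
    ∀ d n : ℕ, l ≤ d → d ≤ n →
      (Δ d n : ℝ) ≤ ((n : ℝ) - d) ^ Real.logb 2 ((β : ℝ) + (d : ℝ) / α) := by
  have hα0 : (0 : ℝ) < (α : ℝ) := by exact_mod_cast hα
  -- β + x/α ≥ 2 whenever x ≥ l
  have hge2 : ∀ x : ℝ, (l : ℝ) ≤ x → (2 : ℝ) ≤ (β : ℝ) + x / α := by
    intro x hx
    refine hβl.trans ?_
    gcongr
  suffices H : ∀ k : ℕ, ∀ d n : ℕ, d + n ≤ k → l ≤ d → d ≤ n →
      (Δ d n : ℝ) ≤ ((n : ℝ) - d) ^ Real.logb 2 ((β : ℝ) + (d : ℝ) / α) by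
    exact fun d n h1 h2 => H (d + n) d n le_rfl h1 h2
  intro k
  induction k with
  | zero => intro d n hk hld _; omega
  | succ k IH =>
    intro d n hk hld hdn
    rcases eq_or_lt_of_le hld with hdl | hdl
    · subst hdl; exact hB0 n hdn
    · -- l < d
      have hd1n : ((l : ℝ)) ≤ (d : ℝ) - 1 := by
        have : (l : ℝ) + 1 ≤ (d : ℝ) := by exact_mod_cast hdl
        linarith
      have hexp_pos : 0 < Real.logb 2 ((β : ℝ) + ((d : ℝ) - 1) / α) := by
        refine Real.logb_pos one_lt_two ?_
        have := hge2 _ hd1n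
        linarith
      have hexp_le : Real.logb 2 ((β : ℝ) + ((d : ℝ) - 1) / α)
          ≤ Real.logb 2 ((β : ℝ) + (d : ℝ) / α) := by
        refine Real.logb_le_logb_of_le one_lt_two (by have := hge2 _ hd1n; linarith) ?_
        gcongr
        linarith
      have hx1 : ((n : ℝ) - d) = 0 ∨ 1 ≤ ((n : ℝ) - d) := by
        rcases eq_or_lt_of_le hdn with h | h
        · left; subst h; ring
        · right
          have : (d : ℝ) + 1 ≤ (n : ℝ) := by exact_mod_cast h
          linarith
      by_cases h2d : n < 2 * d
      · -- case (M)
        have step := hM d n (by omega) hdn h2d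
        have ih := IH (d - 1) (n - 1) (by omega) (by omega) (by omega)
        rw [Nat.cast_sub (show 1 ≤ n by omega), Nat.cast_sub (show 1 ≤ d by omega), Nat.cast_one] at ih
        have eb : (n : ℝ) - 1 - ((d : ℝ) - 1) = (n : ℝ) - d := by ring
        rw [eb] at ih
        calc (Δ d n : ℝ) ≤ (Δ (d - 1) (n - 1) : ℝ) := by exact_mod_cast step
          _ ≤ ((n : ℝ) - d) ^ Real.logb 2 ((β : ℝ) + ((d : ℝ) - 1) / α) := ih
          _ ≤ _ := aux_rpow_mono _ _ _ hx1 hexp_pos hexp_le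
      · push_neg at h2d
        by_cases hd0 : d < d₀
        · exact hB1 d n hdl hd0 h2d
        · push_neg at hd0
          by_cases hn2 : n < d + 2 ^ (2 * α + 1)
          · exact hB2 d n hd0 (by omega) h2d hn2
          · push_neg at hn2
            -- case (KK) + hstep
            have step := hKK d n (by omega) (by omega)
            have ih1 := IH (d - 1) (n - 1) (by omega) (by omega) (by omega)
            have ih2 := IH d (n / 2) (by omega) hld (by omega)
            have hs := hstep d n hd0 h2d hn2
            rw [Nat.cast_sub (show 1 ≤ n by omega), Nat.cast_sub (show 1 ≤ d by omega), Nat.cast_one] at ih1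
            have eb : (n : ℝ) - 1 - ((d : ℝ) - 1) = (n : ℝ) - d := by ring
            rw [eb] at ih1
            have hcast : (Δ d n : ℝ)
                ≤ (Δ (d - 1) (n - 1) : ℝ) + 2 * (Δ d (n / 2) : ℝ) + 2 := by
              exact_mod_cast step
            linarith
end

section
/- Let k be a natural number and let g₀, …, g_k be real polynomials with g_k not identically zero and g_k(d) ≥ 0 for every real d ≥ 0; define p(d,n) = Σ_{i=0}^{k} g_i(d)·n^i. Then for every M there exist integers d ≥ M and n ≥ M with n even such that p(d-1, n-1) + 2·p(d, n/2) + 2 > p(d, n). -/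
/-!
Fix `d` and regard `p(d-1, n-1) + 2 p(d, n/2) - p(d, n)` as a polynomial in `n` of degree at most
`k`. Its `n^k`-coefficient is `g_k(d-1) + (2^{1-k} - 1) g_k(d)`, a polynomial in `d` whose leading
coefficient is `2^{1-k}` times that of `g_k`, hence positive. So for a large `d` the
`n^k`-coefficient is positive, and then for large even `n` the whole expression is positive,
in particular `> -2`.
-/

open Polynomial Filter

namespace Polynomial

theorem coeff_taylor_of_natDegree_le {R : Type*} [CommSemiring R] {P : R[X]} {k : ℕ}
    (hP : P.natDegree ≤ k) (r : R) : (taylor r P).coeff k = P.coeff k := by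
  rcases hP.eq_or_lt with rfl | hlt
  · simpa only [leadingCoeff, natDegree_taylor] using leadingCoeff_taylor (r := r) (f := P)
  · rw [coeff_eq_zero_of_natDegree_lt hlt,
      coeff_eq_zero_of_natDegree_lt ((natDegree_taylor P r).trans_lt hlt)]

theorem eventually_pos_eval_of_leadingCoeff_pos {P : ℝ[X]} (hP : 0 < P.leadingCoeff) :
    ∀ᶠ x in atTop, 0 < P.eval x :=
  P.isEquivalent_atTop_lead.eventually_pos <| by
    filter_upwards [eventually_gt_atTop 0] with x hx using by positivity

theorem eventually_pos_eval_of_coeff_pos {P : ℝ[X]} {k : ℕ} (hP : P.natDegree ≤ k)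
    (hk : 0 < P.coeff k) : ∀ᶠ x in atTop, 0 < P.eval x := by
  have hdeg : P.natDegree = k := hP.antisymm (le_natDegree_of_ne_zero hk.ne')
  exact eventually_pos_eval_of_leadingCoeff_pos (by rwa [leadingCoeff, hdeg])

theorem leadingCoeff_pos_of_eventually_nonneg {P : ℝ[X]} (hP : P ≠ 0)
    (hnonneg : ∀ᶠ x in atTop, 0 ≤ P.eval x) : 0 < P.leadingCoeff := by
  refine lt_of_le_of_ne (not_lt.1 fun hneg => ?_) (leadingCoeff_ne_zero.2 hP).symm
  have hevneg : ∀ᶠ x in atTop, P.eval x < 0 :=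
    P.isEquivalent_atTop_lead.eventually_neg <| by
      filter_upwards [eventually_gt_atTop 0] with x hx
      exact mul_neg_of_neg_of_pos hneg (by positivity)
  obtain ⟨x, hneg, hnonneg⟩ := (hevneg.and hnonneg).exists
  exact hneg.not_ge hnonneg

theorem eventually_pos_eval_sub_add_mul_eval {P : ℝ[X]} (hP : 0 < P.leadingCoeff) (r : ℝ)
    {c : ℝ} (hc : 0 < 1 + c) : ∀ᶠ x in atTop, 0 < P.eval (x - r) + c * P.eval x := by
  have hdeg : (taylor (-r) P + C c * P).natDegree ≤ P.natDegree :=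
    natDegree_add_le_of_degree_le (natDegree_taylor P (-r)).le (natDegree_C_mul_le c P)
  have hcoeff : (taylor (-r) P + C c * P).coeff P.natDegree = (1 + c) * P.leadingCoeff := by
    rw [coeff_add, coeff_taylor_of_natDegree_le le_rfl, coeff_C_mul, coeff_natDegree]
    ring
  filter_upwards [eventually_pos_eval_of_coeff_pos hdeg (hcoeff ▸ mul_pos hc hP)] with x hx
  simpa [taylor_eval, ← sub_eq_add_neg] using hx

end Polynomial

section PolyInN

variable {k : ℕ} (g : Fin (k + 1) → ℝ[X])

noncomputable def polyInN (d : ℝ) : ℝ[X] :=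
  ofFn (k + 1) fun i => (g i).eval d

theorem eval_polyInN (d n : ℝ) :
    (polyInN g d).eval n = ∑ i : Fin (k + 1), (g i).eval d * n ^ (i : ℕ) := by
  simp [polyInN, ofFn_eq_sum_monomial, eval_finsetSum]

theorem natDegree_polyInN_le (d : ℝ) : (polyInN g d).natDegree ≤ k :=
  Nat.lt_succ_iff.1 (ofFn_natDegree_lt k.succ_pos _)

theorem coeff_polyInN_self (d : ℝ) : (polyInN g d).coeff k = (g (Fin.last k)).eval d :=
  ofFn_coeff_eq_val_of_lt _ k.lt_succ_self

noncomputable def recursionDefect (d : ℝ) : ℝ[X] :=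
  taylor (-1) (polyInN g (d - 1)) + C 2 * (polyInN g d).comp (C 2⁻¹ * X) - polyInN g d

theorem eval_recursionDefect (d n : ℝ) :
    (recursionDefect g d).eval n =
      (∑ i : Fin (k + 1), (g i).eval (d - 1) * (n - 1) ^ (i : ℕ))
        + 2 * (∑ i : Fin (k + 1), (g i).eval d * (n / 2) ^ (i : ℕ))
        - ∑ i : Fin (k + 1), (g i).eval d * n ^ (i : ℕ) := by
  simp [recursionDefect, taylor_eval, eval_polyInN, ← sub_eq_add_neg, div_eq_inv_mul]

theorem natDegree_recursionDefect_le (d : ℝ) : (recursionDefect g d).natDegree ≤ k := by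
  have hcomp : ((polyInN g d).comp (C 2⁻¹ * X)).natDegree ≤ k :=
    natDegree_comp_le.trans (by simpa using natDegree_polyInN_le g d)
  have hsum :
      (taylor (-1) (polyInN g (d - 1)) + C 2 * (polyInN g d).comp (C 2⁻¹ * X)).natDegree ≤ k :=
    natDegree_add_le_of_degree_le ((natDegree_taylor _ _).trans_le (natDegree_polyInN_le g _))
      ((natDegree_C_mul_le _ _).trans hcomp)
  exact (natDegree_sub_le_of_le hsum (natDegree_polyInN_le g d)).trans (max_self k).le

theorem coeff_recursionDefect_self (d : ℝ) :
    (recursionDefect g d).coeff k =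
      (g (Fin.last k)).eval (d - 1) + (2 * 2⁻¹ ^ k - 1) * (g (Fin.last k)).eval d := by
  rw [recursionDefect, coeff_sub, coeff_add,
    coeff_taylor_of_natDegree_le (natDegree_polyInN_le g _), coeff_C_mul, comp_C_mul_X_coeff,
    coeff_polyInN_self, coeff_polyInN_self]
  ring

end PolyInN

/-- Remark 4.4 / Appendix C: no polynomial `p(d,n) = Σ_{i=0}^{k} g_i(d) n^i`
with leading coefficient polynomial `g_k` nonzero and nonnegative on `d ≥ 0`
can satisfy the inductive-step inequality
`p(d-1,n-1) + 2 p(d,n/2) + 2 ≤ p(d,n)` for all sufficiently large `d` and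
even `n`. -/
theorem no_polynomial_bound (k : ℕ) (g : Fin (k + 1) → Polynomial ℝ)
    (hgk : g (Fin.last k) ≠ 0)
    (hgknonneg : ∀ d : ℝ, 0 ≤ d → 0 ≤ (g (Fin.last k)).eval d) :
    ∀ M : ℕ, ∃ d n : ℕ, M ≤ d ∧ M ≤ n ∧ Even n ∧
      (∑ i : Fin (k + 1), (g i).eval ((d : ℝ) - 1) * ((n : ℝ) - 1) ^ (i : ℕ))
        + 2 * (∑ i : Fin (k + 1), (g i).eval (d : ℝ) * ((n : ℝ) / 2) ^ (i : ℕ))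
        + 2
      > ∑ i : Fin (k + 1), (g i).eval (d : ℝ) * (n : ℝ) ^ (i : ℕ) := by
  intro M
  have hG : 0 < (g (Fin.last k)).leadingCoeff :=
    leadingCoeff_pos_of_eventually_nonneg hgk (eventually_atTop.2 ⟨0, hgknonneg⟩)
  have hc : 0 < 1 + (2 * 2⁻¹ ^ k - 1 : ℝ) := by simp
  obtain ⟨d, hd, hMd⟩ := ((eventually_pos_eval_sub_add_mul_eval hG 1 hc).natCast_atTop.and
    (eventually_ge_atTop M)).exists
  have hdefect : ∀ᶠ m : ℕ in atTop, 0 < (recursionDefect g d).eval (2 * m : ℝ) := by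
    have hpos := eventually_pos_eval_of_coeff_pos (natDegree_recursionDefect_le g d)
      (by rwa [coeff_recursionDefect_self])
    exact (tendsto_natCast_atTop_atTop.const_mul_atTop (two_pos : (0 : ℝ) < 2)).eventually hpos
  obtain ⟨m, hm, hMm⟩ := (hdefect.and (eventually_ge_atTop M)).exists
  refine ⟨d, 2 * m, hMd, by omega, even_two_mul m, ?_⟩
  rw [eval_recursionDefect] at hm
  push_cast
  linarith
end
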